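/- A nilpotent evolution algebra E of type [n,1,m] (so dim Ann(E) = n, dim Ann²(E) = n+1, dim E = n+1+m) over a field is indecomposable if and only if Ann(E) ⊆ E². -/

import Mathlib

/-- The multiplication of a (not necessarily associative) `F`-algebra structure on `A`,
given as a bilinear map. -/
abbrev Mul2 (F A : Type*) [Field F] [AddCommGroup A] [Module F A] :=
  A →ₗ[F] A →ₗ[F] A

variable {F A : Type*} [Field F] [AddCommGroup A] [Module F A]

/-- A submodule is an ideal if it absorbs multiplication on both sides. -/
def IsIdeal (m : Mul2 F A) (I : Submodule F A) : Prop :=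
  ∀ x ∈ I, ∀ y : A, m x y ∈ I ∧ m y x ∈ I

/-- An algebra is decomposable if it is the direct sum of two nonzero ideals. -/
def Decomposable (m : Mul2 F A) : Prop :=
  ∃ I J : Submodule F A, IsIdeal m I ∧ IsIdeal m J ∧ I ≠ ⊥ ∧ J ≠ ⊥ ∧
    I ⊓ J = ⊥ ∧ I ⊔ J = ⊤

/-- The set of `x` with `x A ⊆ N` and `A x ⊆ N`, as a submodule. -/
def annOver (m : Mul2 F A) (N : Submodule F A) : Submodule F A where
  carrier := {x | ∀ y : A, m x y ∈ N ∧ m y x ∈ N}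
  add_mem' := by
    intro a b ha hb y
    constructor
    · simpa using N.add_mem (ha y).1 (hb y).1
    · simpa using N.add_mem (ha y).2 (hb y).2
  zero_mem' := by intro y; simp
  smul_mem' := by
    intro c a ha y
    constructor
    · simpa using N.smul_mem c (ha y).1
    · simpa using N.smul_mem c (ha y).2

/-- The annihilator `{x | xA = Ax = 0}`. -/
def annA (m : Mul2 F A) : Submodule F A := annOver m ⊥

/-- The upper annihilating series: `Ann⁰ = 0`, `Annⁱ/Annⁱ⁻¹ = Ann(A/Annⁱ⁻¹)`. -/
def annSeries (m : Mul2 F A) : ℕ → Submodule F A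
  | 0 => ⊥
  | (k+1) => annOver m (annSeries m k)

/-- The span of all products of elements of `I` with elements of `J`. -/
def mulSub (m : Mul2 F A) (I J : Submodule F A) : Submodule F A :=
  Submodule.span F {z | ∃ x ∈ I, ∃ y ∈ J, z = m x y}

/-- `A²`, the span of all products. -/
def sqA (m : Mul2 F A) : Submodule F A := mulSub m ⊤ ⊤

/-- Right powers: `rpow 0 = A = A^{<1>}`, `rpow (k+1) = (rpow k) · A`. -/
def rpow (m : Mul2 F A) : ℕ → Submodule F A
  | 0 => ⊤
  | (k+1) => mulSub m (rpow m k) ⊤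

/-- Full powers: `apow 0 = A = A¹`, `apow (k+1) = Σ_{i+j=k} (apow i)(apow j)`,
i.e. `A^{k+2} = Σ_{i=1}^{k+1} Aⁱ A^{k+2-i}`. -/
def apow (m : Mul2 F A) : ℕ → Submodule F A
  | 0 => ⊤
  | (k+1) => ⨆ i : Fin (k+1), mulSub m (apow m i.1) (apow m (k - i.1))
  decreasing_by
  · exact i.2
  · exact Nat.lt_succ_of_le (Nat.sub_le _ _)

/-- `A` is nilpotent: `Aⁿ = 0` for some `n`. -/
def IsNilpotentAlg (m : Mul2 F A) : Prop := ∃ n, apow m n = ⊥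

/-- `A` is right nilpotent: `A^{<n>} = 0` for some `n`. -/
def IsRightNilpotentAlg (m : Mul2 F A) : Prop := ∃ n, rpow m n = ⊥

/-- A basis is natural if products of distinct basis vectors vanish. -/
def NaturalBasis (m : Mul2 F A) {ι : Type*} (bs : Module.Basis ι F A) : Prop :=
  ∀ i j, i ≠ j → m (bs i) (bs j) = 0

/-- An evolution algebra: commutative with some finite natural basis. -/
def IsEvolutionAlg (m : Mul2 F A) : Prop :=
  (∀ x y, m x y = m y x) ∧
  ∃ (ι : Type) (_ : Fintype ι) (bs : Module.Basis ι F A), NaturalBasis m bs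

/-- The set of `x` with `x N = 0`, as a submodule. -/
def annIn (m : Mul2 F A) (N : Submodule F A) : Submodule F A where
  carrier := {x | ∀ y ∈ N, m x y = 0}
  add_mem' := by
    intro a b ha hb y hy
    simp [ha y hy, hb y hy]
  zero_mem' := by intro y hy; simp
  smul_mem' := by
    intro c a ha y hy
    simp [ha y hy]

/-!
If `v ∈ Ann(E)` lies outside `E²`, then `F v` is an ideal, and so is every complement of `F v`
containing `E²`; since `Ann(E) ≠ E`, this complement is nonzero and `E` decomposes.

Conversely, let `E = I ⊕ J` with ideals `I` and `J`. Each `Annⁱ(E)` splits as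
`(Annⁱ(E) ∩ I) ⊕ (Annⁱ(E) ∩ J)`, so the one-dimensional jump from `Ann(E)` to `Ann²(E)` takes
place in one summand, and in the other one, say `J`, we get `Ann²(E) ∩ J = Ann(E) ∩ J`.
As `Ann³(E) = E`, all products with elements of `J` lie in `Ann²(E) ∩ J ⊆ Ann(E)`, hence
`J ⊆ Ann²(E) ∩ J ⊆ Ann(E)`. Then `E² ⊆ I`, and `Ann(E) ⊆ E²` gives `J ⊆ I`, i.e. `J = 0`.
-/

open Module

section

variable {m : Mul2 F A}

lemma mem_annOver {N : Submodule F A} {x : A} :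
    x ∈ annOver m N ↔ ∀ y, m x y ∈ N ∧ m y x ∈ N := Iff.rfl

lemma mem_annA {x : A} : x ∈ annA m ↔ ∀ y, m x y = 0 ∧ m y x = 0 := by
  simp [annA, mem_annOver]

lemma mul_mem_sqA (x y : A) : m x y ∈ sqA m :=
  Submodule.subset_span ⟨x, trivial, y, trivial, rfl⟩

lemma annOver_mono {N N' : Submodule F A} (h : N ≤ N') : annOver m N ≤ annOver m N' :=
  fun _ hx y => ⟨h (hx y).1, h (hx y).2⟩

lemma annA_le_annSeries_two : annA m ≤ annSeries m 2 :=
  annOver_mono bot_le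

lemma decomposable_iff : Decomposable m ↔ ∃ I J : Submodule F A,
    IsIdeal m I ∧ IsIdeal m J ∧ I ≠ ⊥ ∧ J ≠ ⊥ ∧ IsCompl I J := by
  simp only [Decomposable, isCompl_iff, disjoint_iff, codisjoint_iff]

lemma isIdeal_of_le_annA {I : Submodule F A} (h : I ≤ annA m) : IsIdeal m I := by
  intro x hx y
  obtain ⟨hxy, hyx⟩ := mem_annA.mp (h hx) y
  rw [hxy, hyx]
  exact ⟨I.zero_mem, I.zero_mem⟩

lemma isIdeal_of_sqA_le {I : Submodule F A} (h : sqA m ≤ I) : IsIdeal m I :=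
  fun x _ y => ⟨h (mul_mem_sqA x y), h (mul_mem_sqA y x)⟩

theorem decomposable_of_not_annA_le_sqA (htop : annA m ≠ ⊤) (h : ¬ annA m ≤ sqA m) :
    Decomposable m := by
  obtain ⟨v, hv, hvsq⟩ := SetLike.not_le_iff_exists.mp h
  have hv0 : v ≠ 0 := fun hv0 => hvsq (hv0 ▸ (sqA m).zero_mem)
  obtain ⟨J, hsqJ, hJv⟩ :=
    ((Submodule.disjoint_span_singleton' hv0).mpr hvsq).exists_isCompl
  have hvA : F ∙ v ≤ annA m := (Submodule.span_singleton_le_iff_mem v _).mpr hv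
  refine decomposable_iff.mpr ⟨F ∙ v, J, isIdeal_of_le_annA hvA, isIdeal_of_sqA_le hsqJ,
    by simpa using hv0, fun hJ => htop ?_, hJv.symm⟩
  have hv_top : F ∙ v = ⊤ := by simpa [hJ] using hJv.sup_eq_top
  exact top_le_iff.mp (hv_top ▸ hvA)

lemma mul_eq_zero_of_disjoint {I J : Submodule F A} (hI : IsIdeal m I) (hJ : IsIdeal m J)
    (hIJ : Disjoint I J) {a b : A} (ha : a ∈ I) (hb : b ∈ J) : m a b = 0 :=
  Submodule.disjoint_def.mp hIJ _ (hI a ha b).1 (hJ b hb a).2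

lemma mem_annOver_of_add_mem {I J N : Submodule F A} (hI : IsIdeal m I) (hJ : IsIdeal m J)
    (hIJ : IsCompl I J) {a b : A} (ha : a ∈ I) (hb : b ∈ J) (hab : a + b ∈ annOver m N) :
    a ∈ annOver m N := by
  intro y
  obtain ⟨c, d, hc, hd, rfl⟩ := Submodule.codisjoint_iff_exists_add_eq.mp hIJ.codisjoint y
  have hIJ0 : ∀ {x z}, x ∈ I → z ∈ J → m x z = 0 := mul_eq_zero_of_disjoint hI hJ hIJ.disjoint
  have hJI0 : ∀ {x z}, x ∈ J → z ∈ I → m x z = 0 :=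
    mul_eq_zero_of_disjoint hJ hI hIJ.disjoint.symm
  have hleft : m a (c + d) = m (a + b) c := by simp [hIJ0 ha hd, hJI0 hb hc]
  have hright : m (c + d) a = m c (a + b) := by simp [hIJ0 hc hb, hJI0 hd ha]
  rw [hleft, hright]
  exact hab c

lemma annOver_eq_inf_sup_inf {I J : Submodule F A} (hI : IsIdeal m I) (hJ : IsIdeal m J)
    (hIJ : IsCompl I J) (N : Submodule F A) :
    annOver m N = annOver m N ⊓ I ⊔ annOver m N ⊓ J := by
  refine le_antisymm (fun x hx => ?_) (sup_le inf_le_left inf_le_left)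
  obtain ⟨a, b, ha, hb, rfl⟩ := Submodule.codisjoint_iff_exists_add_eq.mp hIJ.codisjoint x
  exact Submodule.add_mem_sup
    (Submodule.mem_inf.mpr ⟨mem_annOver_of_add_mem hI hJ hIJ ha hb hx, ha⟩)
    (Submodule.mem_inf.mpr ⟨mem_annOver_of_add_mem hJ hI hIJ.symm hb ha (add_comm a b ▸ hx), hb⟩)

lemma finrank_eq_finrank_inf_add_finrank_inf {S I J : Submodule F A} [FiniteDimensional F S]
    (hIJ : Disjoint I J) (hS : S = S ⊓ I ⊔ S ⊓ J) :
    finrank F S = finrank F ↥(S ⊓ I) + finrank F ↥(S ⊓ J) := by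
  have hinf : S ⊓ I ⊓ (S ⊓ J) = ⊥ :=
    (hIJ.mono inf_le_right inf_le_right).eq_bot
  have := Submodule.finrank_sup_add_finrank_inf_eq (S ⊓ I) (S ⊓ J)
  rwa [← hS, hinf, finrank_bot, add_zero] at this

lemma inf_le_or_inf_le_of_finrank_eq_succ {P Q I J : Submodule F A} [FiniteDimensional F Q]
    (hIJ : Disjoint I J) (hPQ : P ≤ Q) (hP : P = P ⊓ I ⊔ P ⊓ J) (hQ : Q = Q ⊓ I ⊔ Q ⊓ J)
    (hrank : finrank F Q = finrank F P + 1) : Q ⊓ I ≤ P ∨ Q ⊓ J ≤ P := by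
  have := Submodule.finiteDimensional_of_le hPQ
  have hPI : P ⊓ I ≤ Q ⊓ I := inf_le_inf_right I hPQ
  have hPJ : P ⊓ J ≤ Q ⊓ J := inf_le_inf_right J hPQ
  have hP_rank := finrank_eq_finrank_inf_add_finrank_inf hIJ hP
  have hQ_rank := finrank_eq_finrank_inf_add_finrank_inf hIJ hQ
  have hPI_rank := Submodule.finrank_mono hPI
  have hPJ_rank := Submodule.finrank_mono hPJ
  rcases (by omega : finrank F ↥(Q ⊓ I) ≤ finrank F ↥(P ⊓ I) ∨
      finrank F ↥(Q ⊓ J) ≤ finrank F ↥(P ⊓ J)) with h | h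
  · exact .inl (Submodule.eq_of_le_of_finrank_le hPI h ▸ inf_le_left)
  · exact .inr (Submodule.eq_of_le_of_finrank_le hPJ h ▸ inf_le_left)

lemma IsIdeal.le_annOver_of_inf_le {J N P : Submodule F A} (hJ : IsIdeal m J)
    (hJN : J ≤ annOver m N) (hNJ : N ⊓ J ≤ P) : J ≤ annOver m P := fun x hx y =>
  ⟨hNJ (Submodule.mem_inf.mpr ⟨(hJN hx y).1, (hJ x hx y).1⟩),
    hNJ (Submodule.mem_inf.mpr ⟨(hJN hx y).2, (hJ x hx y).2⟩)⟩

lemma sqA_le_of_codisjoint {I J : Submodule F A} (hI : IsIdeal m I) (hIJ : Codisjoint I J)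
    (hJ : J ≤ annA m) : sqA m ≤ I := by
  refine Submodule.span_le.mpr ?_
  rintro _ ⟨x, -, y, -, rfl⟩
  obtain ⟨a, b, ha, hb, rfl⟩ := Submodule.codisjoint_iff_exists_add_eq.mp hIJ x
  have hby : m b y = 0 := (mem_annA.mp (hJ hb) y).1
  simpa [hby] using (hI a ha y).1

lemma eq_bot_of_annSeries_two_inf_le {I J : Submodule F A} (hI : IsIdeal m I)
    (hJ : IsIdeal m J) (hIJ : IsCompl I J) (h3 : annSeries m 3 = ⊤) (hann : annA m ≤ sqA m)
    (hJ2 : annSeries m 2 ⊓ J ≤ annA m) : J = ⊥ := by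
  have hJ2' : J ≤ annSeries m 2 :=
    hJ.le_annOver_of_inf_le (h3.symm ▸ le_top : J ≤ annSeries m 3) hJ2
  have hJA : J ≤ annA m := fun x hx => hJ2 (Submodule.mem_inf.mpr ⟨hJ2' hx, hx⟩)
  have hJI : J ≤ I := hJA.trans (hann.trans (sqA_le_of_codisjoint hI hIJ.codisjoint hJA))
  exact hIJ.disjoint.eq_bot_of_ge hJI

theorem not_decomposable_of_annA_le_sqA [FiniteDimensional F (annSeries m 2)]
    (h3 : annSeries m 3 = ⊤) (hrank : finrank F (annSeries m 2) = finrank F (annA m) + 1)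
    (hann : annA m ≤ sqA m) : ¬ Decomposable m := by
  rw [decomposable_iff]
  rintro ⟨I, J, hI, hJ, hI0, hJ0, hIJ⟩
  have hsplit := annOver_eq_inf_sup_inf hI hJ hIJ
  rcases inf_le_or_inf_le_of_finrank_eq_succ hIJ.disjoint annA_le_annSeries_two (hsplit ⊥)
    (hsplit _) hrank with h | h
  · exact hI0 (eq_bot_of_annSeries_two_inf_le hJ hI hIJ.symm h3 hann h)
  · exact hJ0 (eq_bot_of_annSeries_two_inf_le hI hJ hIJ h3 hann h)

end

theorem stmt17_general {F E : Type*} [Field F] [AddCommGroup E] [Module F E]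
    (m : Mul2 F E) (n : ℕ)
    (h1 : Module.finrank F (annSeries m 1) = n)
    (h2 : Module.finrank F (annSeries m 2) = n + 1)
    (h3 : annSeries m 3 = ⊤) :
    ¬ Decomposable m ↔ annA m ≤ sqA m := by
  have hrank : finrank F (annSeries m 2) = finrank F (annA m) + 1 := by rw [h2, ← h1]; rfl
  have : FiniteDimensional F (annSeries m 2) := Module.finite_of_finrank_pos (by omega)
  have htop : annA m ≠ ⊤ := fun h => by
    have : annSeries m 2 = annA m := le_antisymm (h ▸ le_top) annA_le_annSeries_two
    rw [this] at hrank
    omega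
  exact ⟨not_imp_comm.mp (decomposable_of_not_annA_le_sqA htop),
    not_decomposable_of_annA_le_sqA h3 hrank⟩

/-- A nilpotent evolution algebra of type `[n,1,m]` is indecomposable if and
only if `Ann(E) ⊆ E²`. -/
theorem stmt17 {F E : Type*} [Field F] [AddCommGroup E] [Module F E]
    [FiniteDimensional F E] (m : Mul2 F E) (hev : IsEvolutionAlg m)
    (n mm : ℕ) (hn : 1 ≤ n) (hm : 1 ≤ mm)
    (h1 : Module.finrank F (annSeries m 1) = n)
    (h2 : Module.finrank F (annSeries m 2) = n + 1)
    (h3 : annSeries m 3 = ⊤) (h2top : annSeries m 2 ≠ ⊤)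
    (hdim : Module.finrank F E = n + 1 + mm) :
    ¬ Decomposable m ↔ annA m ≤ sqA m :=
  stmt17_general m n h1 h2 h3
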